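/- In a double category, for a composable pair of vertical morphisms f : A → C and r : C → M such that the companion f* : A ⇸ C of f exists, the vertical composite of the cartesian cell f* ⇒ 1_C (defining the companion) with the unit cell 1_r defines r ∘ f as the pointwise right Kan extension of r along f*. -/
import Mathlib


universe u v w x

/-- A (strict) double category: objects, vertical morphisms, horizontal morphisms
and square-shaped cells, with strictly associative vertical composition of cells and
(strictified) horizontal composition. -/
structure DoubleCat where
  Obj : Type u
  Ver : Obj → Obj → Type v
  vid : ∀ A, Ver A A
  vcomp : ∀ {A B C}, Ver A B → Ver B C → Ver A C
  vid_vcomp : ∀ {A B} (f : Ver A B), vcomp (vid A) f = f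
  vcomp_vid : ∀ {A B} (f : Ver A B), vcomp f (vid B) = f
  vassoc : ∀ {A B C D} (f : Ver A B) (g : Ver B C) (h : Ver C D),
    vcomp (vcomp f g) h = vcomp f (vcomp g h)
  Hor : Obj → Obj → Type w
  hid : ∀ A, Hor A A
  hcomp : ∀ {A B C}, Hor A B → Hor B C → Hor A C
  hid_hcomp : ∀ {A B} (J : Hor A B), hcomp (hid A) J = J
  hcomp_hid : ∀ {A B} (J : Hor A B), hcomp J (hid B) = J
  hassoc : ∀ {A B C D} (J : Hor A B) (H : Hor B C) (K : Hor C D),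
    hcomp (hcomp J H) K = hcomp J (hcomp H K)
  Cell : ∀ {A B C D}, Hor A B → Ver A C → Ver B D → Hor C D → Type x
  cid : ∀ {A B} (J : Hor A B), Cell J (vid A) (vid B) J
  cidV : ∀ {A C} (f : Ver A C), Cell (hid A) f f (hid C)
  vcompCell : ∀ {A B C D E F : Obj} {J : Hor A B} {K : Hor C D} {L : Hor E F}
    {f : Ver A C} {g : Ver B D} {h : Ver C E} {k : Ver D F},
    Cell J f g K → Cell K h k L → Cell J (vcomp f h) (vcomp g k) L
  hcompCell : ∀ {A B C A' B' C' : Obj} {J : Hor A B} {H : Hor B C}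
    {K : Hor A' B'} {L : Hor B' C'} {f : Ver A A'} {g : Ver B B'} {h : Ver C C'},
    Cell J f g K → Cell H g h L → Cell (hcomp J H) f h (hcomp K L)
  cid_vcompCell : ∀ {A B C D} {J : Hor A B} {K : Hor C D} {f : Ver A C} {g : Ver B D}
    (α : Cell J f g K), HEq (vcompCell (cid J) α) α
  vcompCell_cid : ∀ {A B C D} {J : Hor A B} {K : Hor C D} {f : Ver A C} {g : Ver B D}
    (α : Cell J f g K), HEq (vcompCell α (cid K)) α
  vcompCell_assoc : ∀ {A B C D E F G H' : Obj} {J : Hor A B} {K : Hor C D} {L : Hor E F}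
    {N : Hor G H'} {f1 : Ver A C} {g1 : Ver B D} {f2 : Ver C E} {g2 : Ver D F}
    {f3 : Ver E G} {g3 : Ver F H'}
    (α : Cell J f1 g1 K) (β : Cell K f2 g2 L) (γ : Cell L f3 g3 N),
    HEq (vcompCell (vcompCell α β) γ) (vcompCell α (vcompCell β γ))
  interchange : ∀ {A B C A' B' C' A'' B'' C'' : Obj}
    {J : Hor A B} {H : Hor B C} {K : Hor A' B'} {L : Hor B' C'}
    {K' : Hor A'' B''} {L' : Hor B'' C''}
    {f : Ver A A'} {g : Ver B B'} {h : Ver C C'}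
    {f' : Ver A' A''} {g' : Ver B' B''} {h' : Ver C' C''}
    (φ : Cell J f g K) (χ : Cell H g h L) (ψ : Cell K f' g' K') (ξ : Cell L g' h' L'),
    vcompCell (hcompCell φ χ) (hcompCell ψ ξ) = hcompCell (vcompCell φ ψ) (vcompCell χ ξ)
  cid_hcomp : ∀ {A B C} (J : Hor A B) (H : Hor B C),
    cid (hcomp J H) = hcompCell (cid J) (cid H)
  cidV_vid : ∀ A, cidV (vid A) = cid (hid A)
  cidV_vcomp : ∀ {A B C} (f : Ver A B) (g : Ver B C),
    cidV (vcomp f g) = vcompCell (cidV f) (cidV g)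
  hcompCell_assoc : ∀ {A B C D A' B' C' D' : Obj}
    {J : Hor A B} {H : Hor B C} {G : Hor C D}
    {J' : Hor A' B'} {H' : Hor B' C'} {G' : Hor C' D'}
    {f : Ver A A'} {g : Ver B B'} {h : Ver C C'} {k : Ver D D'}
    (α : Cell J f g J') (β : Cell H g h H') (γ : Cell G h k G'),
    HEq (hcompCell (hcompCell α β) γ) (hcompCell α (hcompCell β γ))
  cidV_hcompCell : ∀ {A B A' B'} {J : Hor A B} {J' : Hor A' B'}
    {f : Ver A A'} {g : Ver B B'} (α : Cell J f g J'),
    HEq (hcompCell (cidV f) α) α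
  hcompCell_cidV : ∀ {A B A' B'} {J : Hor A B} {J' : Hor A' B'}
    {f : Ver A A'} {g : Ver B B'} (α : Cell J f g J'),
    HEq (hcompCell α (cidV g)) α

namespace DoubleCat

variable (D : DoubleCat)

/-- A cell is cartesian if every cell with the same horizontal target and vertical
sides factoring through its vertical sides factors uniquely through it. -/
def IsCartesian {A B C E : D.Obj} {J : D.Hor A B} {K : D.Hor C E}
    {f : D.Ver A C} {g : D.Ver B E} (φ : D.Cell J f g K) : Prop :=
  ∀ {X Y : D.Obj} (H : D.Hor X Y) (h : D.Ver X A) (k : D.Ver Y B)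
    (ψ : D.Cell H (D.vcomp h f) (D.vcomp k g) K),
    ∃! ψ' : D.Cell H h k J, ψ = D.vcompCell ψ' φ

/-- A cell is opcartesian if every cell with the same horizontal source and vertical
sides factoring through its vertical sides factors uniquely through it. -/
def IsOpcartesian {A B C E : D.Obj} {J : D.Hor A B} {K : D.Hor C E}
    {f : D.Ver A C} {g : D.Ver B E} (φ : D.Cell J f g K) : Prop :=
  ∀ {X Y : D.Obj} (L : D.Hor X Y) (h : D.Ver C X) (k : D.Ver E Y)
    (χ : D.Cell J (D.vcomp f h) (D.vcomp g k) L),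
    ∃! χ' : D.Cell K h k L, χ = D.vcompCell φ χ'

/-- `(ε, η)` exhibits `fs` as the companion of the vertical morphism `f`. -/
def IsCompanion {A C : D.Obj} (f : D.Ver A C) (fs : D.Hor A C)
    (ε : D.Cell fs f (D.vid C) (D.hid C)) (η : D.Cell (D.hid A) (D.vid A) f fs) : Prop :=
  HEq (D.vcompCell η ε) (D.cidV f) ∧ HEq (D.hcompCell η ε) (D.cid fs)

/-- `(ε, η)` exhibits `gs` as the conjoint of the vertical morphism `g`. -/
def IsConjoint {B E : D.Obj} (g : D.Ver B E) (gs : D.Hor E B)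
    (ε : D.Cell gs (D.vid E) g (D.hid E)) (η : D.Cell (D.hid B) g (D.vid B) gs) : Prop :=
  HEq (D.vcompCell η ε) (D.cidV g) ∧ HEq (D.hcompCell ε η) (D.cid gs)

/-- A vertical morphism is invertible. -/
def VInvertible {A C : D.Obj} (f : D.Ver A C) : Prop :=
  ∃ f' : D.Ver C A, D.vcomp f f' = D.vid A ∧ D.vcomp f' f = D.vid C

/-- A cell has a vertical inverse. -/
def HasVerticalInverse {A B C E : D.Obj} {J : D.Hor A B} {K : D.Hor C E}
    {f : D.Ver A C} {g : D.Ver B E} (φ : D.Cell J f g K) : Prop :=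
  ∃ (f' : D.Ver C A) (g' : D.Ver E B) (ψ : D.Cell K f' g' J),
    D.vcomp f f' = D.vid A ∧ D.vcomp f' f = D.vid C ∧
    D.vcomp g g' = D.vid B ∧ D.vcomp g' g = D.vid E ∧
    HEq (D.vcompCell φ ψ) (D.cid J) ∧ HEq (D.vcompCell ψ φ) (D.cid K)

/-- `ε : J ⇒ 1_M` defines `r` as the right Kan extension of `d` along `J`. -/
def IsRan {A B M : D.Obj} {J : D.Hor A B} {r : D.Ver A M} {d : D.Ver B M}
    (ε : D.Cell J r d (D.hid M)) : Prop :=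
  ∀ (s : D.Ver A M) (φ : D.Cell J s d (D.hid M)),
    ∃! φ' : D.Cell (D.hid A) s r (D.hid M), HEq φ (D.hcompCell φ' ε)

/-- `ε : J ⇒ 1_M` defines `r` as the pointwise right Kan extension of `d` along `J`. -/
def IsPointwiseRan {A B M : D.Obj} {J : D.Hor A B} {r : D.Ver A M} {d : D.Ver B M}
    (ε : D.Cell J r d (D.hid M)) : Prop :=
  ∀ {C : D.Obj} (H : D.Hor C A) (s : D.Ver C M) (φ : D.Cell (D.hcomp H J) s d (D.hid M)),
    ∃! φ' : D.Cell H s r (D.hid M), HEq φ (D.hcompCell φ' ε)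

/-- The vertical cell `ε : r ∘ j ⇒ d` defines `r` as the right Kan extension of `d`
along `j` in the vertical 2-category `V(K)`. -/
def IsRan2 {A B M : D.Obj} (j : D.Ver A B) (r : D.Ver B M) (d : D.Ver A M)
    (ε : D.Cell (D.hid A) (D.vcomp j r) d (D.hid M)) : Prop :=
  ∀ (s : D.Ver B M) (ψ : D.Cell (D.hid A) (D.vcomp j s) d (D.hid M)),
    ∃! ψ' : D.Cell (D.hid B) s r (D.hid M),
      HEq ψ (D.hcompCell (D.vcompCell (D.cidV j) ψ') ε)

/-- `π : 1_T ⇒ J` is a tabulation of `J`: it satisfies the 1- and 2-dimensional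
universal properties. -/
def IsTabulation {T A B : D.Obj} {pA : D.Ver T A} {pB : D.Ver T B} {J : D.Hor A B}
    (π : D.Cell (D.hid T) pA pB J) : Prop :=
  (∀ {X : D.Obj} (φA : D.Ver X A) (φB : D.Ver X B) (φ : D.Cell (D.hid X) φA φB J),
    ∃! φ' : D.Ver X T, D.vcomp φ' pA = φA ∧ D.vcomp φ' pB = φB ∧
      HEq (D.vcompCell (D.cidV φ') π) φ) ∧
  (∀ {X Y : D.Obj} (H : D.Hor X Y)
    (φA : D.Ver X A) (φB : D.Ver X B) (φ : D.Cell (D.hid X) φA φB J)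
    (ψA : D.Ver Y A) (ψB : D.Ver Y B) (ψ : D.Cell (D.hid Y) ψA ψB J)
    (φ' : D.Ver X T) (ψ' : D.Ver Y T),
    (D.vcomp φ' pA = φA ∧ D.vcomp φ' pB = φB ∧ HEq (D.vcompCell (D.cidV φ') π) φ) →
    (D.vcomp ψ' pA = ψA ∧ D.vcomp ψ' pB = ψB ∧ HEq (D.vcompCell (D.cidV ψ') π) ψ) →
    ∀ (ξA : D.Cell H φA ψA (D.hid A)) (ξB : D.Cell H φB ψB (D.hid B)),
      HEq (D.hcompCell ξA ψ) (D.hcompCell φ ξB) →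
      ∃! ξ' : D.Cell H φ' ψ' (D.hid T),
        HEq (D.vcompCell ξ' (D.cidV pA)) ξA ∧ HEq (D.vcompCell ξ' (D.cidV pB)) ξB)

section Aux

variable (D : DoubleCat)

/-- Cast a cell along equalities of its boundaries. -/
def cellCast {A B C E : D.Obj} {J J' : D.Hor A B} {K K' : D.Hor C E}
    {f f' : D.Ver A C} {g g' : D.Ver B E}
    (hJ : J = J') (hf : f = f') (hg : g = g') (hK : K = K')
    (α : D.Cell J f g K) : D.Cell J' f' g' K' := by
  subst hJ; subst hf; subst hg; subst hK; exact α

theorem cellCast_heq {A B C E : D.Obj} {J J' : D.Hor A B} {K K' : D.Hor C E}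
    {f f' : D.Ver A C} {g g' : D.Ver B E}
    (hJ : J = J') (hf : f = f') (hg : g = g') (hK : K = K')
    (α : D.Cell J f g K) : HEq (cellCast D hJ hf hg hK α) α := by
  subst hJ; subst hf; subst hg; subst hK; rfl

theorem vcongr {A B C E F G : D.Obj} {J J' : D.Hor A B} {K K' : D.Hor C E}
    {L L' : D.Hor F G} {f f' : D.Ver A C} {g g' : D.Ver B E}
    {h h' : D.Ver C F} {k k' : D.Ver E G}
    {α : D.Cell J f g K} {α' : D.Cell J' f' g' K'}
    {β : D.Cell K h k L} {β' : D.Cell K' h' k' L'}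
    (hJ : J = J') (hK : K = K') (hL : L = L') (hf : f = f') (hg : g = g')
    (hh : h = h') (hk : k = k') (hα : HEq α α') (hβ : HEq β β') :
    HEq (D.vcompCell α β) (D.vcompCell α' β') := by
  subst hJ; subst hK; subst hL; subst hf; subst hg; subst hh; subst hk
  rw [eq_of_heq hα, eq_of_heq hβ]

theorem hcongr {A B C A' B' C' : D.Obj} {J J₂ : D.Hor A B} {H H₂ : D.Hor B C}
    {K K₂ : D.Hor A' B'} {L L₂ : D.Hor B' C'}
    {f f₂ : D.Ver A A'} {g g₂ : D.Ver B B'} {h h₂ : D.Ver C C'}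
    {α : D.Cell J f g K} {α' : D.Cell J₂ f₂ g₂ K₂}
    {β : D.Cell H g h L} {β' : D.Cell H₂ g₂ h₂ L₂}
    (hJ : J = J₂) (hH : H = H₂) (hK : K = K₂) (hL : L = L₂)
    (hf : f = f₂) (hg : g = g₂) (hh : h = h₂)
    (hα : HEq α α') (hβ : HEq β β') :
    HEq (D.hcompCell α β) (D.hcompCell α' β') := by
  subst hJ; subst hH; subst hK; subst hL; subst hf; subst hg; subst hh
  rw [eq_of_heq hα, eq_of_heq hβ]

end Aux

end DoubleCat


/-- Precomposition is a pointwise right Kan extension: the vertical composite of the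
cartesian cell `f_* ⇒ 1_C` defining the companion of `f` with `1_r` defines `r ∘ f` as
the pointwise right Kan extension of `r` along `f_*`. -/
theorem stmt11 (D : DoubleCat) {A C M : D.Obj} (f : D.Ver A C) (r : D.Ver C M)
    {fs : D.Hor A C} {eps : D.Cell fs f (D.vid C) (D.hid C)}
    {eta : D.Cell (D.hid A) (D.vid A) f fs}
    (hc : D.IsCompanion f fs eps eta) :
    D.IsPointwiseRan (D.vcompCell eps (D.cidV r)) := by
  intro P H s φ
  set ε := D.vcompCell eps (D.cidV r) with hε
  -- the "bent" cell
  have e1 : D.hcomp H (D.hid A) = H := D.hcomp_hid H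
  have e2 : D.vcomp (D.vid P) s = s := D.vid_vcomp s
  have e3 : D.vcomp f (D.vcomp (D.vid C) r) = D.vcomp f r := by rw [D.vid_vcomp]
  set X1 : D.Cell (D.hcomp H (D.hid A)) (D.vid P) f (D.hcomp H fs) :=
    D.hcompCell (D.cid H) eta with hX1
  set φ0 := D.vcompCell X1 φ with hφ0
  set φ' : D.Cell H s (D.vcomp f r) (D.hid M) :=
    DoubleCat.cellCast D e1 e2 e3 rfl φ0 with hφ'
  have hφ'0 : HEq φ' φ0 := DoubleCat.cellCast_heq D e1 e2 e3 rfl φ0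
  -- the identity-like cell on the right column
  have hξ : HEq (D.cidV (D.vcomp (D.vid C) r)) (D.cidV r) := by
    rw [D.vid_vcomp]
  -- key computation: bending back gives φ
  have c1 : HEq (D.hcompCell X1 eps) (D.cid (D.hcomp H fs)) := by
    have a1 : HEq (D.hcompCell (D.hcompCell (D.cid H) eta) eps)
        (D.hcompCell (D.cid H) (D.hcompCell eta eps)) :=
      D.hcompCell_assoc (D.cid H) eta eps
    have a2 : HEq (D.hcompCell (D.cid H) (D.hcompCell eta eps))
        (D.hcompCell (D.cid H) (D.cid fs)) :=
      DoubleCat.hcongr D rfl (D.hid_hcomp fs) rfl (D.hcomp_hid fs)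
        rfl rfl rfl (HEq.refl _) hc.2
    have a3 : D.hcompCell (D.cid H) (D.cid fs) = D.cid (D.hcomp H fs) :=
      (D.cid_hcomp H fs).symm
    exact (a1.trans a2).trans (heq_of_eq a3)
  have c2 : HEq (D.hcompCell φ (D.cidV (D.vcomp (D.vid C) r))) φ :=
    D.hcompCell_cidV φ
  have key : HEq (D.hcompCell φ' ε) φ := by
    have s1 : HEq (D.hcompCell φ' ε)
        (D.hcompCell (D.vcompCell X1 φ)
          (D.vcompCell eps (D.cidV (D.vcomp (D.vid C) r)))) := by
      refine DoubleCat.hcongr D e1.symm rfl rfl rfl e2.symm e3.symm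
        ?g1 hφ'0 (DoubleCat.vcongr D rfl rfl rfl rfl ?g2 ?g3 ?g4 (HEq.refl _) hξ.symm)
      case g1 => rw [D.vid_vcomp (D.vcomp (D.vid C) r)]
      case g2 => rfl
      case g3 => rw [D.vid_vcomp r]
      case g4 => rw [D.vid_vcomp r]
    have s2 : D.hcompCell (D.vcompCell X1 φ)
          (D.vcompCell eps (D.cidV (D.vcomp (D.vid C) r)))
        = D.vcompCell (D.hcompCell X1 eps)
          (D.hcompCell φ (D.cidV (D.vcomp (D.vid C) r))) :=
      (D.interchange X1 eps φ (D.cidV (D.vcomp (D.vid C) r))).symm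
    have s3 : HEq (D.vcompCell (D.hcompCell X1 eps)
          (D.hcompCell φ (D.cidV (D.vcomp (D.vid C) r))))
        (D.vcompCell (D.cid (D.hcomp H fs)) φ) := by
      refine DoubleCat.vcongr D (by rw [D.hcomp_hid]) (by rw [D.hcomp_hid])
        (by rw [D.hcomp_hid]) rfl rfl rfl rfl c1 c2
    have s4 : HEq (D.vcompCell (D.cid (D.hcomp H fs)) φ) φ := D.cid_vcompCell φ
    exact ((s1.trans (heq_of_eq s2)).trans s3).trans s4
  -- the key cell on the left column
  have d1 : HEq (D.vcompCell eta ε) (D.cidV (D.vcomp f r)) := by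
    have a1 : HEq (D.vcompCell eta (D.vcompCell eps (D.cidV r)))
        (D.vcompCell (D.vcompCell eta eps) (D.cidV r)) :=
      (D.vcompCell_assoc eta eps (D.cidV r)).symm
    have a2 : HEq (D.vcompCell (D.vcompCell eta eps) (D.cidV r))
        (D.vcompCell (D.cidV f) (D.cidV r)) := by
      refine DoubleCat.vcongr D rfl rfl rfl (D.vid_vcomp f) (D.vcomp_vid f)
        rfl rfl hc.1 (HEq.refl _)
    have a3 : D.vcompCell (D.cidV f) (D.cidV r) = D.cidV (D.vcomp f r) :=
      (D.cidV_vcomp f r).symm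
    exact (a1.trans a2).trans (heq_of_eq a3)
  refine ⟨φ', ?_, ?_⟩
  · -- existence
    exact key.symm
  · -- uniqueness
    intro ψ' hψ
    have u1 : HEq φ0 (D.vcompCell X1 (D.hcompCell ψ' ε)) := by
      refine DoubleCat.vcongr D rfl rfl (by rw [D.hid_hcomp]) rfl rfl rfl rfl
        (HEq.refl _) hψ
    have u2 : D.vcompCell (D.hcompCell (D.cid H) eta) (D.hcompCell ψ' ε)
        = D.hcompCell (D.vcompCell (D.cid H) ψ') (D.vcompCell eta ε) :=
      D.interchange (D.cid H) eta ψ' ε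
    have u3 : HEq (D.hcompCell (D.vcompCell (D.cid H) ψ') (D.vcompCell eta ε))
        (D.hcompCell ψ' (D.cidV (D.vcomp f r))) := by
      refine DoubleCat.hcongr D rfl rfl rfl rfl (D.vid_vcomp s)
        (D.vid_vcomp (D.vcomp f r)) e3 (D.cid_vcompCell ψ') d1
    have u4 : HEq (D.hcompCell ψ' (D.cidV (D.vcomp f r))) ψ' :=
      D.hcompCell_cidV ψ'
    have : HEq φ' ψ' := hφ'0.trans (((u1.trans (heq_of_eq u2)).trans u3).trans u4)
    exact (eq_of_heq this).symm
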